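/- arXiv:2505.10054 — 2 statements merged into one kernel-verified Lean document; each statement's English description precedes it below -/
import Mathlib

section
/- Let β > 0, E > 0, q = exp(−β·E), z_τ = (1−q)/(1+q), and let ρ be a 2×2 density matrix with z(ρ) = z_τ. Then for every N ≥ 1: (i) for every energy-preserving unitary U indexed by (Fin 2) × (Fin 2), the output σ = T_U^N(ρ) satisfies z(σ) = z_τ and η(σ) ∈ [0, η(ρ)]; and (ii) conversely, for every η' ∈ [0, η(ρ)] there exists an energy-preserving unitary U with σ = T_U^N(ρ) satisfying z(σ) = z_τ and η(σ) = η'. (The z = z_τ case of the paper's Theorem 1.) -/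
/-!
An energy-preserving `U` is block diagonal for the energy level `a + b` of the joint
system. The product `τ ⊗ τ` of Gibbs states depends only on that level, so it commutes with `U`
and the channel fixes `τ`. The populations of the output depend only on those of the input, while
its coherence is the input coherence times
`μ_U = ∑ c, τ_c · U_{(0,c),(0,c)} · conj U_{(1,c),(1,c)}`, and `|μ_U| ≤ 1` because the entries of
a unitary are bounded by `1`. A state with `z = z_τ` has exactly the populations of `τ`, so `N`
collisions keep them and multiply its coherence by `μ_U ^ N`. Conversely, a partial swap with
amplitude `t` on the one-excitation subspace has `μ_U = t`, and `t = (η' / η) ^ (1 / N)` reaches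
coherence `η'`.
-/

open scoped BigOperators
open Matrix
open scoped ComplexOrder

/-- The qubit collision channel: the system qubit interacts with a molecule qubit in the
Gibbs state diag(1/(1+q), q/(1+q)) via the joint unitary `U`, and the molecule is traced out. -/
noncomputable def collide (q : ℝ) (U : Matrix (Fin 2 × Fin 2) (Fin 2 × Fin 2) ℂ)
    (ρ : Matrix (Fin 2) (Fin 2) ℂ) : Matrix (Fin 2) (Fin 2) ℂ :=
  Matrix.of fun a b => ∑ c : Fin 2,
    (U * (Matrix.kroneckerMap (· * ·) ρ
        (Matrix.diagonal fun j : Fin 2 => ((q ^ (j : ℕ) / (1 + q) : ℝ) : ℂ))) * Uᴴ)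
      (a, c) (b, c)

namespace Matrix

variable {n R : Type*} [Fintype n] [DecidableEq n]

theorem apply_eq_zero_of_mul_diagonal_eq [CommRing R] [NoZeroDivisors R] {U : Matrix n n R}
    {d : n → R} (hU : U * diagonal d = diagonal d * U) {x y : n} (hxy : d x ≠ d y) :
    U x y = 0 := by
  have h := congrFun (congrFun hU x) y
  rw [mul_diagonal, diagonal_mul] at h
  have : (d y - d x) * U x y = 0 := by linear_combination h
  exact (mul_eq_zero.mp this).resolve_left (sub_ne_zero.mpr hxy.symm)

theorem mul_diagonal_eq_of_apply_eq_zero [CommSemiring R] {U : Matrix n n R} {d : n → R}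
    (hU : ∀ x y, d x ≠ d y → U x y = 0) : U * diagonal d = diagonal d * U := by
  ext x y
  rw [mul_diagonal, diagonal_mul]
  by_cases hxy : d x = d y
  · rw [hxy, mul_comm]
  · simp [hU x y hxy]

end Matrix

def energyLevel (x : Fin 2 × Fin 2) : ℕ := x.1 + x.2

abbrev PreservesEnergyLevel (U : Matrix (Fin 2 × Fin 2) (Fin 2 × Fin 2) ℂ) : Prop :=
  ∀ x y, energyLevel x ≠ energyLevel y → U x y = 0

noncomputable def hamiltonian (E : ℝ) : Matrix (Fin 2 × Fin 2) (Fin 2 × Fin 2) ℂ :=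
  diagonal fun ab => ((((ab.1 : ℕ) + (ab.2 : ℕ)) * E : ℝ) : ℂ)

theorem mul_hamiltonian_eq_iff {E : ℝ} (hE : E ≠ 0)
    {U : Matrix (Fin 2 × Fin 2) (Fin 2 × Fin 2) ℂ} :
    U * hamiltonian E = hamiltonian E * U ↔ PreservesEnergyLevel U := by
  have henergy : ∀ x y : Fin 2 × Fin 2,
      ((((x.1 : ℕ) + (x.2 : ℕ)) * E : ℝ) : ℂ) = ((((y.1 : ℕ) + (y.2 : ℕ)) * E : ℝ) : ℂ) ↔
        energyLevel x = energyLevel y := by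
    intro x y
    rw [Complex.ofReal_inj, mul_left_inj' hE, energyLevel, energyLevel]
    exact_mod_cast Iff.rfl
  exact ⟨fun hU x y hxy => apply_eq_zero_of_mul_diagonal_eq hU fun h => hxy ((henergy x y).mp h),
    fun hU => mul_diagonal_eq_of_apply_eq_zero fun x y h =>
      hU x y fun hl => h ((henergy x y).mpr hl)⟩

noncomputable def gibbsWeight (q : ℝ) (j : Fin 2) : ℝ := q ^ (j : ℕ) / (1 + q)

noncomputable def gibbsState (q : ℝ) : Matrix (Fin 2) (Fin 2) ℂ :=
  diagonal fun j => (gibbsWeight q j : ℂ)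

theorem sum_gibbsWeight {q : ℝ} (hq : 1 + q ≠ 0) : ∑ j, gibbsWeight q j = 1 := by
  simp only [gibbsWeight, Fin.sum_univ_two, Fin.val_zero, Fin.val_one, pow_zero, pow_one,
    ← add_div, div_self hq]

theorem gibbsWeight_mul_gibbsWeight (q : ℝ) (x : Fin 2 × Fin 2) :
    gibbsWeight q x.1 * gibbsWeight q x.2 = q ^ energyLevel x / (1 + q) ^ 2 := by
  rw [gibbsWeight, gibbsWeight, div_mul_div_comm, ← pow_add, sq, energyLevel]

theorem diag_eq_gibbsState_diag {q : ℝ} (hq : 1 + q ≠ 0) {ρ : Matrix (Fin 2) (Fin 2) ℂ}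
    (hρ : ρ.IsHermitian) (htr : ρ.trace = 1)
    (hz : (ρ 0 0).re - (ρ 1 1).re = (1 - q) / (1 + q)) :
    ρ.diag = (gibbsState q).diag := by
  have hsum : (ρ 0 0).re + (ρ 1 1).re = 1 := by
    simpa using congrArg Complex.re ((trace_fin_two ρ).symm.trans htr)
  have hw0 : gibbsWeight q 0 = (1 + (1 - q) / (1 + q)) / 2 := by
    simp only [gibbsWeight, Fin.val_zero, pow_zero]; field_simp; ring
  have hw1 : gibbsWeight q 1 = (1 - (1 - q) / (1 + q)) / 2 := by
    simp only [gibbsWeight, Fin.val_one, pow_one]; field_simp; ring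
  ext j
  rw [diag_apply, ← hρ.coe_re_apply_self, gibbsState, diag_diagonal]
  congr 1
  fin_cases j
  · change (ρ 0 0).re = gibbsWeight q 0
    linarith
  · change (ρ 1 1).re = gibbsWeight q 1
    linarith

noncomputable def coherenceFactor (q : ℝ) (U : Matrix (Fin 2 × Fin 2) (Fin 2 × Fin 2) ℂ) : ℂ :=
  ∑ c, (gibbsWeight q c : ℂ) * U (0, c) (0, c) * star (U (1, c) (1, c))

section Collide

variable {q : ℝ} {U : Matrix (Fin 2 × Fin 2) (Fin 2 × Fin 2) ℂ}

theorem norm_coherenceFactor_le_one (hq : 0 ≤ q) (hU : U ∈ unitaryGroup (Fin 2 × Fin 2) ℂ) :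
    ‖coherenceFactor q U‖ ≤ 1 := by
  have hw : ∀ c, 0 ≤ gibbsWeight q c := fun c => by unfold gibbsWeight; positivity
  calc ‖coherenceFactor q U‖
      ≤ ∑ c, ‖(gibbsWeight q c : ℂ) * U (0, c) (0, c) * star (U (1, c) (1, c))‖ :=
        norm_sum_le _ _
    _ ≤ ∑ c, gibbsWeight q c := by
        refine Finset.sum_le_sum fun c _ => ?_
        rw [norm_mul, norm_mul, norm_star, Complex.norm_real, Real.norm_of_nonneg (hw c)]
        have h0 := entry_norm_bound_of_unitary hU (0, c) (0, c)
        have h1 := entry_norm_bound_of_unitary hU (1, c) (1, c)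
        have := hw c
        calc _ ≤ gibbsWeight q c * 1 * 1 := by gcongr
          _ = _ := by ring
    _ = 1 := sum_gibbsWeight (by positivity)

theorem collide_apply_zero_one (hU : PreservesEnergyLevel U) (σ : Matrix (Fin 2) (Fin 2) ℂ) :
    collide q U σ 0 1 = coherenceFactor q U * σ 0 1 := by
  simp only [collide, Complex.ofReal_div, Complex.ofReal_pow, Complex.ofReal_add,
    Complex.ofReal_one, mul_apply, kroneckerMap_apply, Fintype.sum_prod_type, Fin.sum_univ_two,
    Fin.isValue, conjTranspose_apply, RCLike.star_def, diagonal_apply_eq, Fin.coe_ofNat_eq_mod,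
    Nat.zero_mod, pow_zero, one_div, ne_eq, one_ne_zero, not_false_eq_true, diagonal_apply_ne,
    mul_zero, add_zero, zero_ne_one, Nat.mod_succ, pow_one, zero_add, energyLevel,
    Nat.add_eq_zero_iff, Fin.val_eq_zero_iff, and_false, hU, zero_mul, map_zero, of_apply,
    Nat.reduceAdd, OfNat.zero_ne_ofNat, OfNat.one_ne_ofNat, OfNat.ofNat_ne_one, coherenceFactor,
    gibbsWeight]
  ring

theorem diag_collide_eq_diag_collide_diagonal (hU : PreservesEnergyLevel U)
    (σ : Matrix (Fin 2) (Fin 2) ℂ) :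
    (collide q U σ).diag = (collide q U (diagonal σ.diag)).diag := by
  ext a
  fin_cases a <;>
    simp [collide, mul_apply, Fintype.sum_prod_type, Fin.sum_univ_two, hU, energyLevel]

theorem collide_gibbsState (hq : 1 + q ≠ 0) (hU : U ∈ unitaryGroup (Fin 2 × Fin 2) ℂ)
    (hlevel : PreservesEnergyLevel U) : collide q U (gibbsState q) = gibbsState q := by
  set G := kroneckerMap (· * ·) (gibbsState q) (gibbsState q)
  have hG : G = diagonal fun x => ((q ^ energyLevel x / (1 + q) ^ 2 : ℝ) : ℂ) := by
    simp only [G, gibbsState, diagonal_kronecker_diagonal, ← gibbsWeight_mul_gibbsWeight]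
    push_cast
    rfl
  have hcomm : U * G = G * U := by
    rw [hG]
    exact mul_diagonal_eq_of_apply_eq_zero fun x y h => hlevel x y fun hl => h (by rw [hl])
  have hinv : U * G * Uᴴ = G := by
    rw [hcomm, mul_assoc, show U * Uᴴ = 1 from mem_unitaryGroup_iff.mp hU, mul_one]
  have htrace : ∑ i, gibbsState q i i = 1 := by
    simp [gibbsState, ← Complex.ofReal_sum, sum_gibbsWeight hq]
  change of (fun a b => ∑ c, (U * G * Uᴴ) (a, c) (b, c)) = _
  ext a b
  simp only [hinv, G, of_apply, kroneckerMap_apply, ← Finset.mul_sum]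
  rw [htrace, mul_one]

theorem diag_collide_of_diag_eq (hq : 1 + q ≠ 0) (hU : U ∈ unitaryGroup (Fin 2 × Fin 2) ℂ)
    (hlevel : PreservesEnergyLevel U) {σ : Matrix (Fin 2) (Fin 2) ℂ}
    (hσ : σ.diag = (gibbsState q).diag) : (collide q U σ).diag = (gibbsState q).diag := by
  have hτ : diagonal (gibbsState q).diag = gibbsState q := (isDiag_diagonal _).diagonal_diag
  rw [diag_collide_eq_diag_collide_diagonal hlevel, hσ, hτ, collide_gibbsState hq hU hlevel]

theorem collide_iterate (hq : 1 + q ≠ 0) (hU : U ∈ unitaryGroup (Fin 2 × Fin 2) ℂ)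
    (hlevel : PreservesEnergyLevel U) {σ : Matrix (Fin 2) (Fin 2) ℂ}
    (hσ : σ.diag = (gibbsState q).diag) (n : ℕ) :
    ((collide q U)^[n] σ).diag = σ.diag ∧
      ((collide q U)^[n] σ) 0 1 = coherenceFactor q U ^ n * σ 0 1 := by
  induction n with
  | zero => simp
  | succ n ih =>
    rw [Function.iterate_succ_apply', collide_apply_zero_one hlevel, ih.2, pow_succ', mul_assoc,
      diag_collide_of_diag_eq hq hU hlevel (ih.1.trans hσ), hσ]
    exact ⟨rfl, rfl⟩

end Collide

noncomputable def partialSwap (t s : ℝ) : Matrix (Fin 2 × Fin 2) (Fin 2 × Fin 2) ℂ :=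
  of fun x y =>
    if x = y then (if energyLevel x = 1 then (t : ℂ) else 1)
    else if x = (0, 1) ∧ y = (1, 0) then (s : ℂ)
    else if x = (1, 0) ∧ y = (0, 1) then -(s : ℂ)
    else 0

theorem preservesEnergyLevel_partialSwap (t s : ℝ) : PreservesEnergyLevel (partialSwap t s) := by
  intro x y h
  fin_cases x <;> fin_cases y <;> simp_all [partialSwap, energyLevel]

theorem partialSwap_mem_unitaryGroup {t s : ℝ} (h : t ^ 2 + s ^ 2 = 1) :
    partialSwap t s ∈ unitaryGroup (Fin 2 × Fin 2) ℂ := by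
  have hts : (t : ℂ) * t + s * s = 1 := by exact_mod_cast (sq t ▸ sq s ▸ h)
  have hst : (s : ℂ) * s + t * t = 1 := by rw [add_comm, hts]
  rw [mem_unitaryGroup_iff]
  ext x y
  fin_cases x <;> fin_cases y <;>
    simp [partialSwap, energyLevel, mul_apply, Fintype.sum_prod_type, Fin.sum_univ_two, one_apply,
      mul_comm (s : ℂ), hts, hst]

theorem coherenceFactor_partialSwap {q : ℝ} (hq : 1 + q ≠ 0) (t s : ℝ) :
    coherenceFactor q (partialSwap t s) = t := by
  have hterm : ∀ c, (gibbsWeight q c : ℂ) * partialSwap t s (0, c) (0, c) *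
      star (partialSwap t s (1, c) (1, c)) = gibbsWeight q c * t := by
    intro c
    fin_cases c <;> simp [partialSwap, energyLevel]
  rw [coherenceFactor, Finset.sum_congr rfl fun c _ => hterm c, ← Finset.sum_mul,
    ← Complex.ofReal_sum, sum_gibbsWeight hq, Complex.ofReal_one, one_mul]

theorem exists_pow_mul_eq {η η' : ℝ} (h0 : 0 ≤ η') (hle : η' ≤ η) {N : ℕ} (hN : N ≠ 0) :
    ∃ t : ℝ, 0 ≤ t ∧ t ≤ 1 ∧ t ^ N * η = η' := by
  have hη : 0 ≤ η := h0.trans hle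
  have hr0 : 0 ≤ η' / η := div_nonneg h0 hη
  refine ⟨(η' / η) ^ (N⁻¹ : ℝ), by positivity,
    Real.rpow_le_one hr0 (div_le_one_of_le₀ hle hη) (by positivity), ?_⟩
  rw [Real.rpow_inv_natCast_pow hr0 hN]
  exact div_mul_cancel_of_imp fun h => le_antisymm (h ▸ hle) h0

theorem qubit_cone_z_eq_ztau_general
    (β E : ℝ) (hE : 0 < E) (q : ℝ) (hq : q = Real.exp (-β * E))
    (zτ : ℝ) (hzτ : zτ = (1 - q) / (1 + q))
    (ρ : Matrix (Fin 2) (Fin 2) ℂ) (hρ : ρ.PosSemidef) (htr : ρ.trace = 1)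
    (hzρ : (ρ 0 0).re - (ρ 1 1).re = zτ)
    (N : ℕ) (hN : 1 ≤ N) :
    (∀ U : Matrix (Fin 2 × Fin 2) (Fin 2 × Fin 2) ℂ,
      U ∈ Matrix.unitaryGroup (Fin 2 × Fin 2) ℂ →
      U * Matrix.diagonal
          (fun ab : Fin 2 × Fin 2 => ((((ab.1 : ℕ) + (ab.2 : ℕ)) * E : ℝ) : ℂ))
        = Matrix.diagonal
          (fun ab : Fin 2 × Fin 2 => ((((ab.1 : ℕ) + (ab.2 : ℕ)) * E : ℝ) : ℂ)) * U →
      ((((collide q U)^[N] ρ) 0 0).re - (((collide q U)^[N] ρ) 1 1).re = zτ ∧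
        0 ≤ ‖((collide q U)^[N] ρ) 0 1‖ ∧
        ‖((collide q U)^[N] ρ) 0 1‖ ≤ ‖ρ 0 1‖))
    ∧ (∀ η' : ℝ, 0 ≤ η' → η' ≤ ‖ρ 0 1‖ →
      ∃ U : Matrix (Fin 2 × Fin 2) (Fin 2 × Fin 2) ℂ,
        U ∈ Matrix.unitaryGroup (Fin 2 × Fin 2) ℂ ∧
        U * Matrix.diagonal
            (fun ab : Fin 2 × Fin 2 => ((((ab.1 : ℕ) + (ab.2 : ℕ)) * E : ℝ) : ℂ))
          = Matrix.diagonal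
            (fun ab : Fin 2 × Fin 2 => ((((ab.1 : ℕ) + (ab.2 : ℕ)) * E : ℝ) : ℂ)) * U ∧
        (((collide q U)^[N] ρ) 0 0).re - (((collide q U)^[N] ρ) 1 1).re = zτ ∧
        ‖((collide q U)^[N] ρ) 0 1‖ = η') := by
  have hq0 : 0 ≤ q := hq ▸ (Real.exp_pos _).le
  have hq1 : 1 + q ≠ 0 := by positivity
  have hρτ := diag_eq_gibbsState_diag hq1 hρ.isHermitian htr (hzρ.trans hzτ)
  have hz : ∀ σ : Matrix (Fin 2) (Fin 2) ℂ, σ.diag = ρ.diag → (σ 0 0).re - (σ 1 1).re = zτ :=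
    fun σ h => by
      rw [show σ 0 0 = ρ 0 0 from congrFun h 0, show σ 1 1 = ρ 1 1 from congrFun h 1, hzρ]
  refine ⟨fun U hU hcomm => ?_, fun η' hη0 hη => ?_⟩
  · obtain ⟨hdiag, hcoh⟩ :=
      collide_iterate hq1 hU ((mul_hamiltonian_eq_iff hE.ne').mp hcomm) hρτ N
    refine ⟨hz _ hdiag, norm_nonneg _, ?_⟩
    rw [hcoh, norm_mul, norm_pow]
    exact mul_le_of_le_one_left (norm_nonneg _)
      (pow_le_one₀ (norm_nonneg _) (norm_coherenceFactor_le_one hq0 hU))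
  · obtain ⟨t, ht0, ht1, htη⟩ := exists_pow_mul_eq hη0 hη (by omega : N ≠ 0)
    have hts : t ^ 2 + √(1 - t ^ 2) ^ 2 = 1 := by rw [Real.sq_sqrt (by nlinarith)]; ring
    have hU := partialSwap_mem_unitaryGroup hts
    have hlevel := preservesEnergyLevel_partialSwap t √(1 - t ^ 2)
    obtain ⟨hdiag, hcoh⟩ := collide_iterate hq1 hU hlevel hρτ N
    refine ⟨_, hU, (mul_hamiltonian_eq_iff hE.ne').mpr hlevel, hz _ hdiag, ?_⟩
    rw [hcoh, coherenceFactor_partialSwap hq1, norm_mul, norm_pow, Complex.norm_real,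
      Real.norm_of_nonneg ht0, htη]

/-- The z = z_τ case of the paper's Theorem 1: (i) any N identical energy-preserving
collisions fix z at z_τ and can only shrink the coherence; (ii) conversely any coherence
value in [0, η(ρ)] is reachable with z staying at z_τ. -/
theorem qubit_cone_z_eq_ztau
    (β E : ℝ) (hβ : 0 < β) (hE : 0 < E) (q : ℝ) (hq : q = Real.exp (-β * E))
    (zτ : ℝ) (hzτ : zτ = (1 - q) / (1 + q))
    (ρ : Matrix (Fin 2) (Fin 2) ℂ) (hρ : ρ.PosSemidef) (htr : ρ.trace = 1)
    (hzρ : (ρ 0 0).re - (ρ 1 1).re = zτ)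
    (N : ℕ) (hN : 1 ≤ N) :
    (∀ U : Matrix (Fin 2 × Fin 2) (Fin 2 × Fin 2) ℂ,
      U ∈ Matrix.unitaryGroup (Fin 2 × Fin 2) ℂ →
      U * Matrix.diagonal
          (fun ab : Fin 2 × Fin 2 => ((((ab.1 : ℕ) + (ab.2 : ℕ)) * E : ℝ) : ℂ))
        = Matrix.diagonal
          (fun ab : Fin 2 × Fin 2 => ((((ab.1 : ℕ) + (ab.2 : ℕ)) * E : ℝ) : ℂ)) * U →
      ((((collide q U)^[N] ρ) 0 0).re - (((collide q U)^[N] ρ) 1 1).re = zτ ∧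
        0 ≤ ‖((collide q U)^[N] ρ) 0 1‖ ∧
        ‖((collide q U)^[N] ρ) 0 1‖ ≤ ‖ρ 0 1‖))
    ∧ (∀ η' : ℝ, 0 ≤ η' → η' ≤ ‖ρ 0 1‖ →
      ∃ U : Matrix (Fin 2 × Fin 2) (Fin 2 × Fin 2) ℂ,
        U ∈ Matrix.unitaryGroup (Fin 2 × Fin 2) ℂ ∧
        U * Matrix.diagonal
            (fun ab : Fin 2 × Fin 2 => ((((ab.1 : ℕ) + (ab.2 : ℕ)) * E : ℝ) : ℂ))
          = Matrix.diagonal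
            (fun ab : Fin 2 × Fin 2 => ((((ab.1 : ℕ) + (ab.2 : ℕ)) * E : ℝ) : ℂ)) * U ∧
        (((collide q U)^[N] ρ) 0 0).re - (((collide q U)^[N] ρ) 1 1).re = zτ ∧
        ‖((collide q U)^[N] ρ) 0 1‖ = η') :=
  qubit_cone_z_eq_ztau_general β E hE q hq zτ hzτ ρ hρ htr hzρ N hN
end

section
/- Let β > 0, ε > 0, q = exp(−β·ε), τ̄_0 = 1/(1+q), τ̄_1 = q/(1+q), and 0 ≤ p̄_0 < τ̄_0. Consider a system of three qubits with joint input distribution p(a₁,a₂,a₃) = p̄_{a₁}·τ̄_{a₂}·τ̄_{a₃} (where p̄ = (p̄_0, 1−p̄_0)) and a molecule of three qubits in the Gibbs distribution τ(b₁,b₂,b₃) = τ̄_{b₁}·τ̄_{b₂}·τ̄_{b₃}, all qubits having energy gap ε. Then there exists a unitary complex matrix U indexed by ((Fin 2)³) × ((Fin 2)³), commuting with the diagonal total-energy matrix H((a),(b)) = ε·(a₁+a₂+a₃+b₁+b₂+b₃), such that the output population of the system's all-ground configuration equals (τ̄_0 + τ̄_0·τ̄_1·(τ̄_0 − p̄_0))·τ̄_0²,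 and this value is strictly greater than τ̄_0³. (The paper's three-qubit example: a system state violating (R3) can be cooled below the bath temperature by a single collision with a molecule of the same size.) -/
/-!
The collision is the permutation matrix of an involution of the joint configurations that
preserves the number of excitations, so it is unitary and commutes with the total energy.
Exchanging the first qubits of system and molecule whenever the system's other two qubits are
in the ground state hands the system's first qubit the molecule's Gibbs distribution, giving
ground population `τ̄₀³`. The extra exchange `|000⟩|011⟩ ↔ |110⟩|000⟩` then moves the population
`p(110, 000) - p(000, 011) = τ̄₀³ τ̄₁ (τ̄₀ - p̄₀) > 0` into the system's ground state.
-/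

open scoped BigOperators
open Matrix

namespace Matrix

variable {n R : Type*} [Fintype n] [DecidableEq n]

theorem permMatrix_mem_unitaryGroup [CommRing R] [StarRing R] (σ : Equiv.Perm n) :
    σ.permMatrix R ∈ unitaryGroup n R := by
  rw [mem_unitaryGroup_iff, star_eq_conjTranspose, conjTranspose_permMatrix, ← permMatrix_mul,
    inv_mul_cancel, permMatrix_one]

theorem permMatrix_mul_diagonal_mul_conjTranspose [NonAssocSemiring R] [StarRing R]
    (σ : Equiv.Perm n) (d : n → R) :
    σ.permMatrix R * diagonal d * (σ.permMatrix R)ᴴ = diagonal (d ∘ σ) := by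
  rw [conjTranspose_permMatrix, PEquiv.toMatrix_toPEquiv_mul, PEquiv.mul_toMatrix_toPEquiv,
    submatrix_submatrix]
  exact submatrix_diagonal_equiv d σ

theorem permMatrix_mul_diagonal_of_comp_eq [CommRing R] [StarRing R] (σ : Equiv.Perm n)
    {d : n → R} (hd : d ∘ σ = d) :
    σ.permMatrix R * diagonal d = diagonal d * σ.permMatrix R := by
  have hunit := permMatrix_mem_unitaryGroup (R := R) σ
  calc σ.permMatrix R * diagonal d
      = σ.permMatrix R * diagonal d * ((σ.permMatrix R)ᴴ * σ.permMatrix R) := by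
        rw [← star_eq_conjTranspose, Unitary.star_mul_self_of_mem hunit, Matrix.mul_one]
    _ = diagonal d * σ.permMatrix R := by
        rw [← Matrix.mul_assoc, permMatrix_mul_diagonal_mul_conjTranspose, hd]

end Matrix

abbrev Qubits3 := Fin 2 × Fin 2 × Fin 2

def excitations (a : Qubits3) : ℕ := a.1 + a.2.1 + a.2.2

def coolingSwap : Qubits3 × Qubits3 → Qubits3 × Qubits3
  | ((0, 0, 0), (0, 1, 1)) => ((1, 1, 0), (0, 0, 0))
  | ((1, 1, 0), (0, 0, 0)) => ((0, 0, 0), (0, 1, 1))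
  | ((a, 0, 0), (b, b₂, b₃)) => ((b, 0, 0), (a, b₂, b₃))
  | x => x

theorem coolingSwap_involutive : Function.Involutive coolingSwap := by
  unfold Function.Involutive; decide

def coolingPerm : Equiv.Perm (Qubits3 × Qubits3) := coolingSwap_involutive.toPerm

theorem excitations_coolingPerm (x : Qubits3 × Qubits3) :
    excitations (coolingPerm x).1 + excitations (coolingPerm x).2 =
      excitations x.1 + excitations x.2 := by
  revert x; decide

def inputPopulation (p τ : Fin 2 → ℝ) (x : Qubits3 × Qubits3) : ℝ :=
  p x.1.1 * τ x.1.2.1 * τ x.1.2.2 * (τ x.2.1 * τ x.2.2.1 * τ x.2.2.2)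

theorem sum_inputPopulation_coolingPerm_ground (p τ : Fin 2 → ℝ) (hp : p 0 + p 1 = 1)
    (hτ : τ 0 + τ 1 = 1) :
    ∑ b : Qubits3, inputPopulation p τ (coolingPerm ((0, 0, 0), b)) =
      (τ 0 + τ 0 * τ 1 * (τ 0 - p 0)) * τ 0 ^ 2 := by
  simp only [Fintype.sum_prod_type, Fin.sum_univ_two, coolingPerm,
    Function.Involutive.coe_toPerm, coolingSwap, inputPopulation]
  rw [eq_sub_of_add_eq hp, eq_sub_of_add_eq hτ]
  ring

theorem three_qubit_sub_bath_cooling_general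
    (β ε : ℝ) (q : ℝ) (hq : q = Real.exp (-β * ε))
    (τb : Fin 2 → ℝ) (hτb : ∀ b, τb b = q ^ (b : ℕ) / (1 + q))
    (pb : Fin 2 → ℝ) (p₀ : ℝ) (hp₀' : p₀ < τb 0)
    (hpb : pb = ![p₀, 1 - p₀]) :
    ∃ U : Matrix ((Fin 2 × Fin 2 × Fin 2) × (Fin 2 × Fin 2 × Fin 2))
          ((Fin 2 × Fin 2 × Fin 2) × (Fin 2 × Fin 2 × Fin 2)) ℂ,
      U ∈ Matrix.unitaryGroup ((Fin 2 × Fin 2 × Fin 2) × (Fin 2 × Fin 2 × Fin 2)) ℂ ∧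
      U * Matrix.diagonal
          (fun ab : (Fin 2 × Fin 2 × Fin 2) × (Fin 2 × Fin 2 × Fin 2) =>
            ((ε * (((ab.1.1 : ℕ) + (ab.1.2.1 : ℕ) + (ab.1.2.2 : ℕ)) +
              ((ab.2.1 : ℕ) + (ab.2.2.1 : ℕ) + (ab.2.2.2 : ℕ))) : ℝ) : ℂ))
        = Matrix.diagonal
          (fun ab : (Fin 2 × Fin 2 × Fin 2) × (Fin 2 × Fin 2 × Fin 2) =>
            ((ε * (((ab.1.1 : ℕ) + (ab.1.2.1 : ℕ) + (ab.1.2.2 : ℕ)) +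
              ((ab.2.1 : ℕ) + (ab.2.2.1 : ℕ) + (ab.2.2.2 : ℕ))) : ℝ) : ℂ)) * U ∧
      (∑ b : Fin 2 × Fin 2 × Fin 2,
          (U * Matrix.diagonal
              (fun ab : (Fin 2 × Fin 2 × Fin 2) × (Fin 2 × Fin 2 × Fin 2) =>
                ((pb ab.1.1 * τb ab.1.2.1 * τb ab.1.2.2 *
                  (τb ab.2.1 * τb ab.2.2.1 * τb ab.2.2.2) : ℝ) : ℂ)) * Uᴴ)
            (((0, 0, 0) : Fin 2 × Fin 2 × Fin 2), b)
            (((0, 0, 0) : Fin 2 × Fin 2 × Fin 2), b)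
        = (((τb 0 + τb 0 * τb 1 * (τb 0 - p₀)) * τb 0 ^ 2 : ℝ) : ℂ)) ∧
      τb 0 ^ 3 < (τb 0 + τb 0 * τb 1 * (τb 0 - p₀)) * τb 0 ^ 2 := by
  have hq₀ : 0 < q := hq ▸ Real.exp_pos _
  have hτ₀ : 0 < τb 0 := by rw [hτb]; positivity
  have hτ₁ : 0 < τb 1 := by rw [hτb]; positivity
  have hτ : τb 0 + τb 1 = 1 := by rw [hτb, hτb]; field_simp; simp
  have hp : pb 0 + pb 1 = 1 := by simp [hpb]
  refine ⟨coolingPerm.permMatrix ℂ, permMatrix_mem_unitaryGroup _, ?_, ?_, ?_⟩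
  · refine permMatrix_mul_diagonal_of_comp_eq _ (funext fun x => ?_)
    have h := excitations_coolingPerm x
    simp only [excitations] at h
    simp only [Function.comp_apply]
    exact_mod_cast congrArg (fun k : ℕ => ε * k) h
  · simp only [permMatrix_mul_diagonal_mul_conjTranspose, diagonal_apply_eq, Function.comp_apply]
    have h := sum_inputPopulation_coolingPerm_ground pb τb hp hτ
    rw [show pb 0 = p₀ by simp [hpb]] at h
    exact_mod_cast h
  · linear_combination mul_pos (mul_pos (mul_pos hτ₀ hτ₁) (sub_pos.2 hp₀')) (pow_pos hτ₀ 2)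

/-- The paper's three-qubit example: a three-qubit system whose first qubit is hotter than
the bath (so that (R3) is violated) can be cooled below the bath temperature by a single
energy-preserving collision with a three-qubit molecule of the same size. -/
theorem three_qubit_sub_bath_cooling
    (β ε : ℝ) (hβ : 0 < β) (hε : 0 < ε) (q : ℝ) (hq : q = Real.exp (-β * ε))
    (τb : Fin 2 → ℝ) (hτb : ∀ b, τb b = q ^ (b : ℕ) / (1 + q))
    (pb : Fin 2 → ℝ) (p₀ : ℝ) (hp₀ : 0 ≤ p₀) (hp₀' : p₀ < τb 0)
    (hpb : pb = ![p₀, 1 - p₀]) :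
    ∃ U : Matrix ((Fin 2 × Fin 2 × Fin 2) × (Fin 2 × Fin 2 × Fin 2))
          ((Fin 2 × Fin 2 × Fin 2) × (Fin 2 × Fin 2 × Fin 2)) ℂ,
      U ∈ Matrix.unitaryGroup ((Fin 2 × Fin 2 × Fin 2) × (Fin 2 × Fin 2 × Fin 2)) ℂ ∧
      U * Matrix.diagonal
          (fun ab : (Fin 2 × Fin 2 × Fin 2) × (Fin 2 × Fin 2 × Fin 2) =>
            ((ε * (((ab.1.1 : ℕ) + (ab.1.2.1 : ℕ) + (ab.1.2.2 : ℕ)) +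
              ((ab.2.1 : ℕ) + (ab.2.2.1 : ℕ) + (ab.2.2.2 : ℕ))) : ℝ) : ℂ))
        = Matrix.diagonal
          (fun ab : (Fin 2 × Fin 2 × Fin 2) × (Fin 2 × Fin 2 × Fin 2) =>
            ((ε * (((ab.1.1 : ℕ) + (ab.1.2.1 : ℕ) + (ab.1.2.2 : ℕ)) +
              ((ab.2.1 : ℕ) + (ab.2.2.1 : ℕ) + (ab.2.2.2 : ℕ))) : ℝ) : ℂ)) * U ∧
      (∑ b : Fin 2 × Fin 2 × Fin 2,
          (U * Matrix.diagonal
              (fun ab : (Fin 2 × Fin 2 × Fin 2) × (Fin 2 × Fin 2 × Fin 2) =>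
                ((pb ab.1.1 * τb ab.1.2.1 * τb ab.1.2.2 *
                  (τb ab.2.1 * τb ab.2.2.1 * τb ab.2.2.2) : ℝ) : ℂ)) * Uᴴ)
            (((0, 0, 0) : Fin 2 × Fin 2 × Fin 2), b)
            (((0, 0, 0) : Fin 2 × Fin 2 × Fin 2), b)
        = (((τb 0 + τb 0 * τb 1 * (τb 0 - p₀)) * τb 0 ^ 2 : ℝ) : ℂ)) ∧
      τb 0 ^ 3 < (τb 0 + τb 0 * τb 1 * (τb 0 - p₀)) * τb 0 ^ 2 :=
  three_qubit_sub_bath_cooling_general β ε q hq τb hτb pb p₀ hp₀' hpb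
end
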